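/- arXiv:2601.08312 — 6 statements merged into one kernel-verified Lean document; each statement's English description precedes it below -/
import Mathlib

section
/- For invertible formal power series f, g ∈ y + y²ℂ[[y]], the umbral composition operators satisfy C_f ∘ C_g = C_{g∘f}, where C_f is the linear operator on ℂ[x] with C_f · x^n = p_n^{(f)}(x), the n-th binomial-type polynomial attached to f. -/
open Polynomial Nat

/-- `p` is the binomial-type family attached to `f` (coefficientwise form of
`e^{xy} = Σₙ pₙ(x) f(y)ⁿ / n!`). -/
def IsGenFamily (f : PowerSeries ℂ) (p : ℕ → Polynomial ℂ) : Prop :=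
  ∀ m : ℕ, (1 / (m ! : ℂ)) • (X ^ m : Polynomial ℂ) =
    ∑ n ∈ Finset.range (m + 1),
      ((PowerSeries.coeff m (f ^ n)) / (n ! : ℂ)) • p n

/-- coefficients of powers below the order vanish -/
lemma umbral_aux_vanish (u : PowerSeries ℂ) (hu : PowerSeries.coeff 0 u = 0) :
    ∀ k m : ℕ, m < k → PowerSeries.coeff m (u ^ k) = 0 := by
  intro k
  induction k with
  | zero => intro m hm; omega
  | succ k ih =>
    intro m hm
    rw [pow_succ, PowerSeries.coeff_mul]
    apply Finset.sum_eq_zero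
    rintro ⟨i, j⟩ hij
    rw [Finset.HasAntidiagonal.mem_antidiagonal] at hij
    by_cases hi : i < k
    · rw [ih i hi, zero_mul]
    · have hj : j = 0 := by omega
      rw [hj, hu, mul_zero]

/-- the leading coefficient of a power -/
lemma umbral_aux_diag (u : PowerSeries ℂ) (hu : PowerSeries.coeff 0 u = 0) :
    ∀ k : ℕ, PowerSeries.coeff k (u ^ k) = (PowerSeries.coeff 1 u) ^ k := by
  intro k
  induction k with
  | zero => simp
  | succ k ih =>
    rw [pow_succ, PowerSeries.coeff_mul, pow_succ, ← ih]
    rw [Finset.sum_eq_single_of_mem (k, 1) (by rw [Finset.HasAntidiagonal.mem_antidiagonal])]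
    rintro ⟨i, j⟩ hij hne
    rw [Finset.HasAntidiagonal.mem_antidiagonal] at hij
    by_cases hi : i < k
    · rw [umbral_aux_vanish u hu k i hi, zero_mul]
    · have hj : j = 0 := by
        rcases Nat.lt_or_ge k i with h | h
        · omega
        · exfalso; apply hne; have : i = k := by omega
          subst this; simp_all
      rw [hj, hu, mul_zero]

/-- multiplicativity of the "substituted" representation -/
lemma umbral_mul_key (f A B u v : PowerSeries ℂ)
    (hf0 : PowerSeries.coeff 0 f = 0)
    (hu : ∀ m : ℕ, PowerSeries.coeff m u =
      ∑ n ∈ Finset.range (m + 1), PowerSeries.coeff n A * PowerSeries.coeff m (f ^ n))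
    (hv : ∀ m : ℕ, PowerSeries.coeff m v =
      ∑ n ∈ Finset.range (m + 1), PowerSeries.coeff n B * PowerSeries.coeff m (f ^ n))
    (m : ℕ) :
    PowerSeries.coeff m (u * v) =
      ∑ n ∈ Finset.range (m + 1), PowerSeries.coeff n (A * B) * PowerSeries.coeff m (f ^ n) := by
  classical
  have ext1 : ∀ (C w : PowerSeries ℂ),
      (∀ m : ℕ, PowerSeries.coeff m w =
        ∑ n ∈ Finset.range (m + 1), PowerSeries.coeff n C * PowerSeries.coeff m (f ^ n)) →
      ∀ i ≤ m, PowerSeries.coeff i w =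
        ∑ a ∈ Finset.range (m + 1), PowerSeries.coeff a C * PowerSeries.coeff i (f ^ a) := by
    intro C w hw i hi
    rw [hw i]
    apply Finset.sum_subset
    · intro a ha; rw [Finset.mem_range] at *; omega
    · intro a _ hna
      rw [Finset.mem_range] at hna
      have : i < a := by omega
      rw [umbral_aux_vanish f hf0 a i this, mul_zero]
  rw [PowerSeries.coeff_mul]
  have T : ∀ a b : ℕ,
      (PowerSeries.coeff a A * PowerSeries.coeff b B) * PowerSeries.coeff m (f ^ (a + b)) =
      (PowerSeries.coeff a A * PowerSeries.coeff b B) * PowerSeries.coeff m (f ^ (a + b)) :=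
    fun _ _ => rfl
  calc ∑ ij ∈ Finset.HasAntidiagonal.antidiagonal m, PowerSeries.coeff ij.1 u * PowerSeries.coeff ij.2 v
      = ∑ ij ∈ Finset.HasAntidiagonal.antidiagonal m, ∑ a ∈ Finset.range (m + 1), ∑ b ∈ Finset.range (m + 1),
          (PowerSeries.coeff a A * PowerSeries.coeff ij.1 (f ^ a)) *
          (PowerSeries.coeff b B * PowerSeries.coeff ij.2 (f ^ b)) := by
        refine Finset.sum_congr rfl fun ij hij => ?_
        rw [Finset.HasAntidiagonal.mem_antidiagonal] at hij
        rw [ext1 A u hu ij.1 (by omega), ext1 B v hv ij.2 (by omega), Finset.sum_mul_sum]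
    _ = ∑ a ∈ Finset.range (m + 1), ∑ b ∈ Finset.range (m + 1),
          (PowerSeries.coeff a A * PowerSeries.coeff b B) *
          ∑ ij ∈ Finset.HasAntidiagonal.antidiagonal m, PowerSeries.coeff ij.1 (f ^ a) * PowerSeries.coeff ij.2 (f ^ b) := by
        rw [Finset.sum_comm]
        refine Finset.sum_congr rfl fun a _ => ?_
        rw [Finset.sum_comm]
        refine Finset.sum_congr rfl fun b _ => ?_
        rw [Finset.mul_sum]
        refine Finset.sum_congr rfl fun ij _ => ?_
        ring
    _ = ∑ a ∈ Finset.range (m + 1), ∑ b ∈ Finset.range (m + 1),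
          (PowerSeries.coeff a A * PowerSeries.coeff b B) *
          PowerSeries.coeff m (f ^ (a + b)) := by
        refine Finset.sum_congr rfl fun a _ => Finset.sum_congr rfl fun b _ => ?_
        rw [← PowerSeries.coeff_mul, ← pow_add]
    _ = ∑ x ∈ Finset.range (m + 1) ×ˢ Finset.range (m + 1),
          (PowerSeries.coeff x.1 A * PowerSeries.coeff x.2 B) *
          PowerSeries.coeff m (f ^ (x.1 + x.2)) := (Finset.sum_product' _ _ _).symm
    _ = ∑ x ∈ (Finset.range (m + 1) ×ˢ Finset.range (m + 1)).filter (fun x => x.1 + x.2 ≤ m),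
          (PowerSeries.coeff x.1 A * PowerSeries.coeff x.2 B) *
          PowerSeries.coeff m (f ^ (x.1 + x.2)) := by
        symm
        apply Finset.sum_filter_of_ne
        intro x _ hne
        by_contra hle
        push_neg at hle
        exact hne (by rw [umbral_aux_vanish f hf0 _ _ hle, mul_zero])
    _ = ∑ x ∈ (Finset.range (m + 1)).biUnion (fun n => Finset.HasAntidiagonal.antidiagonal n),
          (PowerSeries.coeff x.1 A * PowerSeries.coeff x.2 B) *
          PowerSeries.coeff m (f ^ (x.1 + x.2)) := by
        congr 1
        ext ⟨a, b⟩
        simp only [Finset.mem_filter, Finset.mem_product, Finset.mem_range,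
          Finset.mem_biUnion, Finset.HasAntidiagonal.mem_antidiagonal]
        constructor
        · rintro ⟨⟨_, _⟩, hle⟩; exact ⟨a + b, by omega, rfl⟩
        · rintro ⟨n, hn, hab⟩; omega
    _ = ∑ n ∈ Finset.range (m + 1), ∑ ab ∈ Finset.HasAntidiagonal.antidiagonal n,
          (PowerSeries.coeff ab.1 A * PowerSeries.coeff ab.2 B) *
          PowerSeries.coeff m (f ^ (ab.1 + ab.2)) := by
        apply Finset.sum_biUnion
        intro x hx y hy hxy
        simp only [Finset.disjoint_left]
        rintro ⟨a, b⟩ ha hb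
        rw [Finset.HasAntidiagonal.mem_antidiagonal] at ha hb
        exact hxy (by omega)
    _ = ∑ n ∈ Finset.range (m + 1), PowerSeries.coeff n (A * B) * PowerSeries.coeff m (f ^ n) := by
        refine Finset.sum_congr rfl fun n _ => ?_
        rw [PowerSeries.coeff_mul, Finset.sum_mul]
        refine Finset.sum_congr rfl fun ab hab => ?_
        rw [Finset.HasAntidiagonal.mem_antidiagonal] at hab
        rw [hab]

/-- Umbral composition: `C_f ∘ C_g = C_{g∘f}`, where `C_f · xⁿ = pₙ^{(f)}` and
`h = g ∘ f` is the composite power series (well defined since `f` has zero constant term). -/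
theorem umbral_composition (f g h : PowerSeries ℂ)
    (hf0 : PowerSeries.coeff 0 f = 0) (hf1 : PowerSeries.coeff 1 f = 1)
    (hg0 : PowerSeries.coeff 0 g = 0) (hg1 : PowerSeries.coeff 1 g = 1)
    (hcomp : ∀ m : ℕ, PowerSeries.coeff m h =
      ∑ n ∈ Finset.range (m + 1),
        PowerSeries.coeff n g * PowerSeries.coeff m (f ^ n))
    (p q r : ℕ → Polynomial ℂ)
    (hp : IsGenFamily f p) (hq : IsGenFamily g q) (hr : IsGenFamily h r)
    (Cf Cg Ch : Polynomial ℂ →ₗ[ℂ] Polynomial ℂ)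
    (hCf : ∀ n : ℕ, Cf (X ^ n) = p n)
    (hCg : ∀ n : ℕ, Cg (X ^ n) = q n)
    (hCh : ∀ n : ℕ, Ch (X ^ n) = r n) :
    Cf ∘ₗ Cg = Ch := by
  classical
  -- coefficients of h
  have hh0 : PowerSeries.coeff 0 h = 0 := by
    have := hcomp 0
    simpa [hg0] using this
  have hh1 : PowerSeries.coeff 1 h = 1 := by
    have := hcomp 1
    simpa [Finset.sum_range_succ, hg0, hg1, hf1] using this
  -- key identity: coefficients of powers of h
  have key : ∀ k m : ℕ, PowerSeries.coeff m (h ^ k) =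
      ∑ n ∈ Finset.range (m + 1),
        PowerSeries.coeff n (g ^ k) * PowerSeries.coeff m (f ^ n) := by
    intro k
    induction k with
    | zero =>
      intro m
      rw [pow_zero]
      rw [Finset.sum_eq_single_of_mem 0 (Finset.mem_range.mpr (by omega))]
      · simp
      · intro n _ hn
        rw [pow_zero]
        rcases Nat.exists_eq_succ_of_ne_zero hn with ⟨j, rfl⟩
        simp [PowerSeries.coeff_one]
    | succ k ih =>
      intro m
      rw [pow_succ, pow_succ]
      exact umbral_mul_key f (g ^ k) g (h ^ k) h hf0 ih hcomp m
  -- apply Cf to the g-family identity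
  have hA : ∀ n : ℕ, (1 / (n ! : ℂ)) • p n =
      ∑ k ∈ Finset.range (n + 1),
        (PowerSeries.coeff n (g ^ k) / (k ! : ℂ)) • Cf (q k) := by
    intro n
    have := congrArg Cf (hq n)
    simpa [map_smul, map_sum, hCf, hCg] using this
  -- the family (Cf (q k)) is generated by h
  have hs : ∀ m : ℕ, (1 / (m ! : ℂ)) • (X ^ m : Polynomial ℂ) =
      ∑ k ∈ Finset.range (m + 1),
        (PowerSeries.coeff m (h ^ k) / (k ! : ℂ)) • Cf (q k) := by
    intro m
    rw [hp m]
    calc ∑ n ∈ Finset.range (m + 1), (PowerSeries.coeff m (f ^ n) / (n ! : ℂ)) • p n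
        = ∑ n ∈ Finset.range (m + 1),
            PowerSeries.coeff m (f ^ n) • ((1 / (n ! : ℂ)) • p n) := by
          refine Finset.sum_congr rfl fun n _ => ?_
          rw [smul_smul]
          congr 1
          field_simp
      _ = ∑ n ∈ Finset.range (m + 1), PowerSeries.coeff m (f ^ n) •
            ∑ k ∈ Finset.range (n + 1),
              (PowerSeries.coeff n (g ^ k) / (k ! : ℂ)) • Cf (q k) := by
          refine Finset.sum_congr rfl fun n _ => ?_
          rw [hA n]
      _ = ∑ n ∈ Finset.range (m + 1), ∑ k ∈ Finset.range (m + 1),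
            PowerSeries.coeff m (f ^ n) •
              ((PowerSeries.coeff n (g ^ k) / (k ! : ℂ)) • Cf (q k)) := by
          refine Finset.sum_congr rfl fun n hn => ?_
          rw [Finset.smul_sum]
          apply Finset.sum_subset
          · intro k hk
            rw [Finset.mem_range] at *
            omega
          · intro k _ hkn
            rw [Finset.mem_range] at hkn
            have : n < k := by omega
            rw [umbral_aux_vanish g hg0 k n this]
            simp
      _ = ∑ k ∈ Finset.range (m + 1),
            ((∑ n ∈ Finset.range (m + 1),
              PowerSeries.coeff n (g ^ k) * PowerSeries.coeff m (f ^ n)) / (k ! : ℂ)) •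
              Cf (q k) := by
          rw [Finset.sum_comm]
          refine Finset.sum_congr rfl fun k _ => ?_
          rw [Finset.sum_div, Finset.sum_smul]
          refine Finset.sum_congr rfl fun n _ => ?_
          rw [smul_smul]
          congr 1
          ring
      _ = ∑ k ∈ Finset.range (m + 1),
            (PowerSeries.coeff m (h ^ k) / (k ! : ℂ)) • Cf (q k) := by
          refine Finset.sum_congr rfl fun k _ => ?_
          rw [key k m]
  -- uniqueness: r k = Cf (q k)
  have huniq : ∀ m : ℕ, r m = Cf (q m) := by
    intro m
    induction m using Nat.strong_induction_on with
    | _ m ih =>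
      have e3 : ∑ k ∈ Finset.range (m + 1),
          (PowerSeries.coeff m (h ^ k) / (k ! : ℂ)) • r k =
        ∑ k ∈ Finset.range (m + 1),
          (PowerSeries.coeff m (h ^ k) / (k ! : ℂ)) • Cf (q k) :=
        (hr m).symm.trans (hs m)
      rw [Finset.sum_range_succ, Finset.sum_range_succ] at e3
      have e4 : ∑ k ∈ Finset.range m, (PowerSeries.coeff m (h ^ k) / (k ! : ℂ)) • r k =
          ∑ k ∈ Finset.range m, (PowerSeries.coeff m (h ^ k) / (k ! : ℂ)) • Cf (q k) := by
        refine Finset.sum_congr rfl fun k hk => ?_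
        rw [Finset.mem_range] at hk
        rw [ih k hk]
      rw [e4] at e3
      have e5 : (PowerSeries.coeff m (h ^ m) / (m ! : ℂ)) • r m =
          (PowerSeries.coeff m (h ^ m) / (m ! : ℂ)) • Cf (q m) := by
        have := add_left_cancel e3
        exact this
      have hd : PowerSeries.coeff m (h ^ m) = 1 := by
        rw [umbral_aux_diag h hh0 m, hh1, one_pow]
      rw [hd] at e5
      have hne : (1 : ℂ) / (m ! : ℂ) ≠ 0 := by
        apply one_div_ne_zero
        exact_mod_cast Nat.factorial_ne_zero m
      have := smul_right_injective (Polynomial ℂ) hne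
      exact this e5
  -- conclude
  apply LinearMap.ext
  intro P
  induction P using Polynomial.induction_on' with
  | add a b ha hb => simp [map_add, ha, hb]
  | monomial n a =>
    have : (monomial n a : Polynomial ℂ) = a • X ^ n := by
      rw [smul_eq_C_mul, C_mul_X_pow_eq_monomial]
    simp only [LinearMap.comp_apply, this, map_smul, hCg, hCh, LinearMap.coe_comp,
      Function.comp_apply]
    rw [show Cf (q n) = r n from (huniq n).symm]
end

section
/- Christoffel–Darboux formula: if monic polynomials p_n satisfy p_{n+1}(x) = (x - a_n)p_n(x) - n b_n p_{n-1}(x) with p_0 = 1 and b_i ≠ 0, then for all n and all x ≠ y, (p_n(y)p_{n+1}(x) - p_{n+1}(y)p_n(x))/(x - y) = Σ_{k=0}^n (n! B_n)/(k! B_k) p_k(x) p_k(y), where B_m = b_1 b_2 ⋯ b_m (B_0 = 1). -/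
/-!
With `c i = i bᵢ`, the Casorati determinant `W n = pₙ(β) pₙ₊₁(α) - pₙ₊₁(β) pₙ(α)` satisfies
`W (n+1) = c (n+1) W n + (α - β) pₙ₊₁(α) pₙ₊₁(β)` and `W 0 = α - β`. Unrolling gives
`W n = (α - β) ∑ₖ (∏_{k < i ≤ n} c i) pₖ(α) pₖ(β)`, and the products of the `c i`
telescope to `n! Bₙ / (k! Bₖ)`.
-/

open Polynomial Nat

section ThreeTermRecurrence

variable {R : Type*} [CommRing R] {a c : ℕ → R} {p : ℕ → R[X]}

def casoratian (p : ℕ → R[X]) (α β : R) (n : ℕ) : R :=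
  (p n).eval β * (p (n + 1)).eval α - (p (n + 1)).eval β * (p n).eval α

theorem casoratian_succ
    (hrec : ∀ n, p (n + 2) = (X - C (a (n + 1))) * p (n + 1) - C (c (n + 1)) * p n)
    (n : ℕ) (α β : R) :
    casoratian p α β (n + 1) =
      c (n + 1) * casoratian p α β n +
        (α - β) * ((p (n + 1)).eval α * (p (n + 1)).eval β) := by
  simp only [casoratian, hrec n, eval_sub, eval_mul, eval_X, eval_C]
  ring

theorem casoratian_eq_sum (hp0 : p 0 = 1) (hp1 : p 1 = X - C (a 0))
    (hrec : ∀ n, p (n + 2) = (X - C (a (n + 1))) * p (n + 1) - C (c (n + 1)) * p n)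
    (n : ℕ) (α β : R) :
    casoratian p α β n =
      (α - β) * ∑ k ∈ Finset.range (n + 1),
        (∏ i ∈ Finset.Ioc k n, c i) * ((p k).eval α * (p k).eval β) := by
  induction n with
  | zero => simp [casoratian, hp0, hp1]
  | succ n ih =>
    have hterm : ∀ k ∈ Finset.range (n + 1),
        (∏ i ∈ Finset.Ioc k (n + 1), c i) * ((p k).eval α * (p k).eval β) =
          c (n + 1) * ((∏ i ∈ Finset.Ioc k n, c i) * ((p k).eval α * (p k).eval β)) :=
      fun k hk => by
        rw [Finset.prod_Ioc_succ_top (Nat.lt_succ_iff.mp (Finset.mem_range.mp hk))]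
        ring
    conv_rhs => rw [Finset.sum_range_succ, Finset.sum_congr rfl hterm, ← Finset.mul_sum]
    rw [casoratian_succ hrec, ih, Finset.Ioc_self, Finset.prod_empty]
    ring

end ThreeTermRecurrence

theorem factorial_mul_prod_Icc_mul_prod_Ioc {K : Type*} [CommSemiring K] (b : ℕ → K) {k n : ℕ}
    (hkn : k ≤ n) :
    ((k ! : K) * ∏ i ∈ Finset.Icc 1 k, b i) * ∏ i ∈ Finset.Ioc k n, (i : K) * b i =
      (n ! : K) * ∏ i ∈ Finset.Icc 1 n, b i := by
  induction n, hkn using Nat.le_induction with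
  | base => simp
  | succ n hkn ih =>
    rw [Finset.prod_Ioc_succ_top hkn, Finset.prod_Icc_succ_top (by omega), factorial_succ,
      ← mul_assoc, ih]
    push_cast
    ring

/-- Christoffel–Darboux formula for monic orthogonal polynomials defined by the
three-term recurrence `p_{n+1} = (x - aₙ)pₙ - n bₙ p_{n-1}`. -/
theorem christoffel_darboux (a b : ℕ → ℂ) (hb : ∀ i, b i ≠ 0)
    (p : ℕ → Polynomial ℂ)
    (hp0 : p 0 = 1) (hp1 : p 1 = X - C (a 0))
    (hrec : ∀ n : ℕ, p (n + 2) =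
      (X - C (a (n + 1))) * p (n + 1) - ((n + 1 : ℕ) : ℂ) • (C (b (n + 1)) * p n))
    (n : ℕ) (α β : ℂ) (hne : α ≠ β) :
    ((p n).eval β * (p (n + 1)).eval α - (p (n + 1)).eval β * (p n).eval α) / (α - β) =
      ∑ k ∈ Finset.range (n + 1),
        ((n ! : ℂ) * ∏ i ∈ Finset.Icc 1 n, b i) /
          ((k ! : ℂ) * ∏ i ∈ Finset.Icc 1 k, b i) *
            ((p k).eval α * (p k).eval β) := by
  have hrec' : ∀ n, p (n + 2) = (X - C (a (n + 1))) * p (n + 1) -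
      C (((n + 1 : ℕ) : ℂ) * b (n + 1)) * p n := fun n => by
    rw [hrec n, smul_eq_C_mul, C_mul, mul_assoc]
  change casoratian p α β n / (α - β) = _
  rw [casoratian_eq_sum (c := fun i => (i : ℂ) * b i) hp0 hp1 hrec',
    mul_div_cancel_left₀ _ (sub_ne_zero.mpr hne)]
  refine Finset.sum_congr rfl fun k hk => ?_
  have hBk : (k ! : ℂ) * ∏ i ∈ Finset.Icc 1 k, b i ≠ 0 :=
    mul_ne_zero (Nat.cast_ne_zero.mpr k.factorial_ne_zero)
      (Finset.prod_ne_zero_iff.mpr fun i _ => hb i)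
  rw [← factorial_mul_prod_Icc_mul_prod_Ioc b (Nat.lt_succ_iff.mp (Finset.mem_range.mp hk)),
    mul_div_cancel_left₀ _ hBk]
end

section
/- Let f_0 ∈ 1 + yℂ[[y]] and define the bilinear form ⟨h₁,h₂⟩ = (f_0(D)·(h₁h₂))(0) on ℂ[x]. If monic polynomials p_n satisfy the three-term recurrence p_{n+1} = (x - a_n)p_n - n b_n p_{n-1} and are orthogonal for this form, then ⟨p_n, p_n⟩ = n! b_1 b_2 ⋯ b_n. -/
open Polynomial Nat

/-- The operator `f₀(D)` on `ℂ[x]`. -/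
noncomputable def opSubst (f : PowerSeries ℂ) (p : Polynomial ℂ) : Polynomial ℂ :=
  ∑ k ∈ Finset.range (p.natDegree + 1),
    (PowerSeries.coeff k f) • (Polynomial.derivative^[k] p)

/-- The inner product `⟨h₁, h₂⟩ = (f₀(D)·(h₁h₂))(0)`. -/
noncomputable def innerF (f0 : PowerSeries ℂ) (h₁ h₂ : Polynomial ℂ) : ℂ :=
  (opSubst f0 (h₁ * h₂)).eval 0

lemma opSubst_eq (f : PowerSeries ℂ) (p : Polynomial ℂ) (N : ℕ) (h : p.natDegree ≤ N) :
    opSubst f p = ∑ k ∈ Finset.range (N + 1),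
      (PowerSeries.coeff k f) • (Polynomial.derivative^[k] p) := by
  unfold opSubst
  apply Finset.sum_subset
  · exact Finset.range_subset_range.2 (by omega)
  · intro k _ hk
    simp only [Finset.mem_range, not_lt] at hk
    rw [Polynomial.iterate_derivative_eq_zero (by omega), smul_zero]

lemma opSubst_add (f : PowerSeries ℂ) (q r : Polynomial ℂ) :
    opSubst f (q + r) = opSubst f q + opSubst f r := by
  rw [opSubst_eq f q (max q.natDegree r.natDegree) (le_max_left _ _),
      opSubst_eq f r (max q.natDegree r.natDegree) (le_max_right _ _),
      opSubst_eq f (q + r) (max q.natDegree r.natDegree)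
        ((Polynomial.natDegree_add_le q r))]
  rw [← Finset.sum_add_distrib]
  congr 1; ext k
  rw [iterate_map_add, smul_add]

lemma opSubst_smul (f : PowerSeries ℂ) (c : ℂ) (q : Polynomial ℂ) :
    opSubst f (c • q) = c • opSubst f q := by
  rw [opSubst_eq f (c • q) q.natDegree (Polynomial.natDegree_smul_le c q)]
  unfold opSubst
  rw [Finset.smul_sum]
  congr 1; ext k
  rw [Polynomial.iterate_derivative_smul, smul_comm]

lemma innerF_add_right (f0 : PowerSeries ℂ) (q r s : Polynomial ℂ) :
    innerF f0 q (r + s) = innerF f0 q r + innerF f0 q s := by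
  unfold innerF
  rw [mul_add, opSubst_add, Polynomial.eval_add]

lemma innerF_smul_right (f0 : PowerSeries ℂ) (q : Polynomial ℂ) (c : ℂ) (r : Polynomial ℂ) :
    innerF f0 q (c • r) = c * innerF f0 q r := by
  unfold innerF
  rw [mul_smul_comm, opSubst_smul, Polynomial.eval_smul, smul_eq_mul]

lemma innerF_C_mul_right (f0 : PowerSeries ℂ) (q : Polynomial ℂ) (c : ℂ) (r : Polynomial ℂ) :
    innerF f0 q (C c * r) = c * innerF f0 q r := by
  rw [← Polynomial.smul_eq_C_mul, innerF_smul_right]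

/-- Norm formula: if the monic polynomials `pₙ` of the three-term recurrence are
orthogonal for `⟨·,·⟩_{f₀}`, then `⟨pₙ, pₙ⟩ = n! b₁⋯bₙ`. -/
theorem norm_formula (f0 : PowerSeries ℂ) (hf0 : PowerSeries.coeff 0 f0 = 1)
    (a b : ℕ → ℂ) (hb : ∀ i, b i ≠ 0)
    (p : ℕ → Polynomial ℂ)
    (hp0 : p 0 = 1) (hp1 : p 1 = X - C (a 0))
    (hrec : ∀ n : ℕ, p (n + 2) =
      (X - C (a (n + 1))) * p (n + 1) - ((n + 1 : ℕ) : ℂ) • (C (b (n + 1)) * p n))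
    (horth : ∀ m n : ℕ, m ≠ n → innerF f0 (p m) (p n) = 0)
    (n : ℕ) :
    innerF f0 (p n) (p n) = (n ! : ℂ) * ∏ i ∈ Finset.Icc 1 n, b i := by
  have hdecomp : ∀ m : ℕ, X * p (m + 1) = p (m + 2) + (C (a (m + 1)) * p (m + 1)
      + C (((m + 1 : ℕ)) : ℂ) * (C (b (m + 1)) * p m)) := by
    intro m
    rw [hrec m, Polynomial.smul_eq_C_mul]
    ring
  have key : ∀ m : ℕ, innerF f0 (p (m + 1)) (p (m + 1)) =
      ((m + 1 : ℕ) : ℂ) * (b (m + 1) * innerF f0 (p m) (p m)) := by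
    intro m
    have hA : innerF f0 (p (m + 1)) (p (m + 1)) = innerF f0 (p (m + 1)) (X * p m) := by
      cases m with
      | zero =>
        have h0 : X * p 0 = p 1 + C (a 0) * p 0 := by
          rw [hp0, hp1]; ring
        rw [h0, innerF_add_right, innerF_C_mul_right, horth 1 0 (by omega),
          mul_zero, add_zero]
      | succ k =>
        rw [hdecomp k, innerF_add_right, innerF_add_right, innerF_C_mul_right,
          innerF_C_mul_right, innerF_C_mul_right,
          horth (k + 2) (k + 1) (by omega), horth (k + 2) k (by omega)]
        ring
    have hB : innerF f0 (p (m + 1)) (X * p m) = innerF f0 (p m) (X * p (m + 1)) := by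
      have h : p (m + 1) * (X * p m) = p m * (X * p (m + 1)) := by ring
      unfold innerF
      rw [h]
    rw [hA, hB, hdecomp m, innerF_add_right, innerF_add_right, innerF_C_mul_right,
      innerF_C_mul_right, innerF_C_mul_right,
      horth m (m + 2) (by omega), horth m (m + 1) (by omega)]
    ring
  induction n with
  | zero =>
    simp [innerF, opSubst, hp0, hf0]
  | succ m ih =>
    rw [key m, ih, Finset.prod_Icc_succ_top (by omega : 1 ≤ m + 1), Nat.factorial_succ]
    push_cast
    ring
end

section
/- Let f ∈ y + y²ℂ[[y]] satisfy the differential equation f'(y) = 1 + λa f(y) + λb f(y)² for constants λ, a, b ∈ ℂ, λ ≠ 0. Then, setting Tf = f/f', the operator identity x·f'(D)^{-1/λ}·(1 + λx·(Tf)(D))^{-1}·f'(D)^{1/λ} = x·((Tf)'(D) + λx·(Tf)(D))^{-1} holds on polynomials, where both inverses are well-defined since the relevant operators are invertible on ℂ[x]. -/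
open Polynomial

/-- `T` is the operator `g(D)` on `ℂ[x]`. -/
def IsSubstD (g : PowerSeries ℂ) (T : Module.End ℂ (Polynomial ℂ)) : Prop :=
  ∀ p : Polynomial ℂ, T p =
    ∑ k ∈ Finset.range (p.natDegree + 1),
      (PowerSeries.coeff k g) • (Polynomial.derivative^[k] p)

/-- `u = g^α`: constant term `1` and `u' g = α g' u`. -/
def IsFPow (g : PowerSeries ℂ) (α : ℂ) (u : PowerSeries ℂ) : Prop :=
  PowerSeries.coeff 0 u = 1 ∧
    PowerSeries.derivativeFun u * g = α • (PowerSeries.derivativeFun g * u)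

/-- Multiplication by `X` as an endomorphism of `ℂ[x]`. -/
noncomputable def mulX : Module.End ℂ (Polynomial ℂ) :=
  LinearMap.mulLeft ℂ (X : Polynomial ℂ)

lemma coeff_derivativeFun' (f : PowerSeries ℂ) (n : ℕ) :
    PowerSeries.coeff n (PowerSeries.derivativeFun f) = PowerSeries.coeff (n + 1) f * (n + 1) :=
  PowerSeries.coeff_derivative f n


noncomputable def substDfun (g : PowerSeries ℂ) (p : Polynomial ℂ) : Polynomial ℂ :=
  ∑ k ∈ Finset.range (p.natDegree + 1),
    (PowerSeries.coeff k g) • (Polynomial.derivative^[k] p)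

lemma substDfun_eq (g : PowerSeries ℂ) (p : Polynomial ℂ) {N : ℕ} (h : p.natDegree < N) :
    substDfun g p = ∑ k ∈ Finset.range N,
      (PowerSeries.coeff k g) • (Polynomial.derivative^[k] p) := by
  apply Finset.sum_subset
  · exact Finset.range_subset_range.2 h
  · intro k _ hk
    rw [Finset.mem_range, not_lt] at hk
    rw [Polynomial.iterate_derivative_eq_zero (lt_of_lt_of_le (Nat.lt_of_succ_le le_rfl) ?_ ), smul_zero]
    omega

noncomputable def substD (g : PowerSeries ℂ) : Module.End ℂ (Polynomial ℂ) where
  toFun := substDfun g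
  map_add' p q := by
    rw [substDfun_eq g p (N := max p.natDegree q.natDegree + 1) (by omega),
      substDfun_eq g q (N := max p.natDegree q.natDegree + 1) (by omega),
      substDfun_eq g (p + q) (N := max p.natDegree q.natDegree + 1)
        (Nat.lt_succ_of_le ((Polynomial.natDegree_add_le p q)))]
    rw [← Finset.sum_add_distrib]
    refine Finset.sum_congr rfl fun k _ => ?_
    rw [iterate_map_add, smul_add]
  map_smul' c p := by
    show substDfun g (c • p) = c • substDfun g p
    rw [substDfun_eq g (c • p) (N := p.natDegree + 1)
        (Nat.lt_succ_of_le (Polynomial.natDegree_smul_le c p)), substDfun]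
    rw [Finset.smul_sum]
    refine Finset.sum_congr rfl fun k _ => ?_
    rw [Polynomial.iterate_derivative_smul, smul_comm]

lemma substD_apply (g : PowerSeries ℂ) (p : Polynomial ℂ) {N : ℕ} (h : p.natDegree < N) :
    substD g p = ∑ k ∈ Finset.range N,
      (PowerSeries.coeff k g) • (Polynomial.derivative^[k] p) := substDfun_eq g p h

lemma isSubstD_iff (g : PowerSeries ℂ) (T : Module.End ℂ (Polynomial ℂ)) :
    (∀ p : Polynomial ℂ, T p =
    ∑ k ∈ Finset.range (p.natDegree + 1),
      (PowerSeries.coeff k g) • (Polynomial.derivative^[k] p)) ↔ T = substD g := by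
  constructor
  · intro h; apply LinearMap.ext; intro p; exact h p
  · intro h p; rw [h]; rfl

lemma substD_one : substD (1 : PowerSeries ℂ) = 1 := by
  apply LinearMap.ext; intro p
  show substDfun 1 p = p
  rw [substDfun, Finset.sum_eq_single 0]
  · simp
  · intro k _ hk
    rw [PowerSeries.coeff_one, if_neg hk, zero_smul]
  · simp

lemma substD_add (g h : PowerSeries ℂ) : substD (g + h) = substD g + substD h := by
  apply LinearMap.ext; intro p
  show substDfun (g+h) p = substDfun g p + substDfun h p
  rw [substDfun, substDfun, substDfun, ← Finset.sum_add_distrib]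
  exact Finset.sum_congr rfl fun k _ => by rw [map_add, add_smul]

lemma substD_smul (c : ℂ) (g : PowerSeries ℂ) : substD (c • g) = c • substD g := by
  apply LinearMap.ext; intro p
  show substDfun (c • g) p = c • substDfun g p
  rw [substDfun, substDfun, Finset.smul_sum]
  exact Finset.sum_congr rfl fun k _ => by rw [map_smul, smul_assoc]

lemma sum_antidiag_eq {M : Type*} [AddCommMonoid M] (N : ℕ) (F : ℕ → ℕ → M)
    (hF : ∀ k j, N ≤ k + j → F k j = 0) :
    ∑ m ∈ Finset.range N, ∑ ij ∈ Finset.HasAntidiagonal.antidiagonal m, F ij.1 ij.2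
      = ∑ k ∈ Finset.range N, ∑ j ∈ Finset.range N, F k j := by
  classical
  rw [← Finset.sum_biUnion, ← Finset.sum_product']
  · apply Finset.sum_subset
    · intro x hx
      simp only [Finset.mem_biUnion, Finset.mem_range, Finset.HasAntidiagonal.mem_antidiagonal] at hx
      obtain ⟨m, hm, hx⟩ := hx
      simp only [Finset.mem_product, Finset.mem_range]
      omega
    · intro x hx hx'
      simp only [Finset.mem_biUnion, Finset.mem_range, Finset.HasAntidiagonal.mem_antidiagonal] at hx'
      push_neg at hx'
      exact hF x.1 x.2 (by by_contra hc; exact (hx' (x.1+x.2) (by omega)) rfl)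
  · intro m hm m' hm' hne
    apply Finset.disjoint_left.2
    intro x hx hx'
    rw [Finset.HasAntidiagonal.mem_antidiagonal] at hx hx'
    exact hne (hx ▸ hx')

lemma substD_mul (g h : PowerSeries ℂ) : substD (g * h) = substD g * substD h := by
  apply LinearMap.ext; intro p
  set N := p.natDegree + 1 with hN
  have hdeg : ∀ j, (Polynomial.derivative^[j] p).natDegree < N := fun j =>
    Nat.lt_succ_of_le ((Polynomial.natDegree_iterate_derivative p j).trans (Nat.sub_le _ _))
  rw [substD_apply (g*h) p (Nat.lt_succ_self _)]
  rw [Module.End.mul_apply, substD_apply h p (Nat.lt_succ_self _), map_sum]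
  have hrhs : ∀ j, substD g ((PowerSeries.coeff j h) • Polynomial.derivative^[j] p)
      = ∑ k ∈ Finset.range N, ((PowerSeries.coeff k g) * (PowerSeries.coeff j h)) •
          Polynomial.derivative^[k+j] p := by
    intro j
    rw [map_smul, substD_apply g _ (hdeg j), Finset.smul_sum]
    refine Finset.sum_congr rfl fun k _ => ?_
    rw [smul_smul, mul_comm ((PowerSeries.coeff k) g), Function.iterate_add_apply,
      mul_comm ((PowerSeries.coeff j) h)]
  simp only [hrhs]
  rw [Finset.sum_comm]
  rw [← sum_antidiag_eq N (fun k j => ((PowerSeries.coeff k g) * (PowerSeries.coeff j h)) •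
      Polynomial.derivative^[k+j] p)
      (fun k j hkj => by
        simp only [Polynomial.iterate_derivative_eq_zero (show p.natDegree < k + j by omega),
          smul_zero])]
  refine Finset.sum_congr rfl fun m hm => ?_
  rw [PowerSeries.coeff_mul, Finset.sum_smul]
  refine Finset.sum_congr rfl fun ij hij => ?_
  rw [Finset.HasAntidiagonal.mem_antidiagonal] at hij
  rw [hij]

lemma iter_deriv_X_mul (p : Polynomial ℂ) (k : ℕ) :
    Polynomial.derivative^[k+1] (X * p)
      = X * Polynomial.derivative^[k+1] p + ((k:ℂ)+1) • Polynomial.derivative^[k] p := by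
  induction k with
  | zero => simp [Polynomial.derivative_mul]; ring
  | succ k ih =>
    rw [Function.iterate_succ_apply', ih]
    rw [map_add, Polynomial.derivative_mul, Polynomial.derivative_X, one_mul, map_smul,
      Function.iterate_succ_apply' (⇑Polynomial.derivative) (k+1) p,
      Function.iterate_succ_apply' (⇑Polynomial.derivative) k p]
    push_cast
    module

lemma substD_mulX (g : PowerSeries ℂ) :
    substD g * mulX = mulX * substD g + substD (PowerSeries.derivativeFun g) := by
  apply LinearMap.ext; intro p
  have h1 : (X * p).natDegree < p.natDegree + 2 := by
    have := Polynomial.natDegree_mul_le (p := (X:Polynomial ℂ)) (q := p)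
    simp only [Polynomial.natDegree_X] at this
    omega
  simp only [Module.End.mul_apply, LinearMap.add_apply, mulX, LinearMap.mulLeft_apply]
  rw [substD_apply g (X * p) h1, substD_apply g p (Nat.lt_succ_of_le (Nat.le_succ _)),
    substD_apply (PowerSeries.derivativeFun g) p (Nat.lt_succ_self _)]
  rw [Finset.sum_range_succ' _ (p.natDegree + 1)]
  simp only [iter_deriv_X_mul, Function.iterate_zero_apply, smul_add]
  rw [Finset.sum_add_distrib, Finset.mul_sum, Finset.sum_range_succ' _ (p.natDegree + 1)]
  simp only [Function.iterate_zero_apply, mul_smul_comm]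
  have h2 : ∑ k ∈ Finset.range (p.natDegree + 1),
        (PowerSeries.coeff k) (PowerSeries.derivativeFun g) • (⇑Polynomial.derivative)^[k] p
      = ∑ x ∈ Finset.range (p.natDegree + 1),
        (PowerSeries.coeff (x + 1)) g • (((x:ℂ) + 1) • (⇑Polynomial.derivative)^[x] p) := by
    refine Finset.sum_congr rfl fun x _ => ?_
    rw [coeff_derivativeFun', smul_smul, mul_comm]
  rw [h2]
  abel

lemma ps_eq_one (h : PowerSeries ℂ) (h0 : PowerSeries.coeff 0 h = 1)
    (hd : PowerSeries.derivativeFun h = 0) : h = 1 := by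
  ext n
  cases n with
  | zero => rw [h0, PowerSeries.coeff_one, if_pos rfl]
  | succ n =>
    have h1 := congrArg (PowerSeries.coeff n) hd
    rw [coeff_derivativeFun', map_zero] at h1
    rcases mul_eq_zero.mp h1 with h2 | h2
    · rw [h2, PowerSeries.coeff_one, if_neg (Nat.succ_ne_zero n)]
    · exact absurd h2 (Nat.cast_add_one_ne_zero n)

/-- For `f` with `f' = 1 + λa f + λb f²` and `Tf = f/f'`, the operator identity
`x f'(D)^{-1/λ} (1 + λ x Tf(D))⁻¹ f'(D)^{1/λ} = x ((Tf)'(D) + λ x Tf(D))⁻¹`. -/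
theorem ultraspherical_trick (lam a b : ℂ) (hlam : lam ≠ 0)
    (f : PowerSeries ℂ)
    (hf0 : PowerSeries.coeff 0 f = 0) (hf1 : PowerSeries.coeff 1 f = 1)
    (hODE : PowerSeries.derivativeFun f = 1 + (lam * a) • f + (lam * b) • (f ^ 2))
    (Tf : PowerSeries ℂ) (hTf : Tf = f * (PowerSeries.derivativeFun f)⁻¹)
    (um vm : PowerSeries ℂ)
    (hum : IsFPow (PowerSeries.derivativeFun f) (-(1 / lam)) um)
    (hvm : IsFPow (PowerSeries.derivativeFun f) (1 / lam) vm)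
    (Su Sv T T' : Module.End ℂ (Polynomial ℂ))
    (hSu : IsSubstD um Su) (hSv : IsSubstD vm Sv)
    (hT : IsSubstD Tf T) (hT' : IsSubstD (PowerSeries.derivativeFun Tf) T')
    (A B Ainv Binv : Module.End ℂ (Polynomial ℂ))
    (hA : A = 1 + lam • (mulX * T)) (hB : B = T' + lam • (mulX * T))
    (hAinv : A * Ainv = 1 ∧ Ainv * A = 1)
    (hBinv : B * Binv = 1 ∧ Binv * B = 1) :
    mulX * Su * Ainv * Sv = mulX * Binv := by
  have hSu' : Su = substD um := (isSubstD_iff _ _).1 hSu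
  have hSv' : Sv = substD vm := (isSubstD_iff _ _).1 hSv
  have hT2 : T = substD Tf := (isSubstD_iff _ _).1 hT
  have hT'2 : T' = substD (PowerSeries.derivativeFun Tf) := (isSubstD_iff _ _).1 hT'
  set g := PowerSeries.derivativeFun f with hg
  set dvm := PowerSeries.derivativeFun vm with hdvm
  -- constant coefficient of g is 1
  have hg0 : PowerSeries.constantCoeff g = 1 := by
    rw [← PowerSeries.coeff_zero_eq_constantCoeff_apply, hg,
      coeff_derivativeFun', hf1]
    norm_num
  have hgne : g ≠ 0 := fun h => by rw [h, map_zero] at hg0; exact one_ne_zero hg0.symm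
  -- um * vm = 1
  have huv : um * vm = 1 := by
    apply ps_eq_one
    · rw [PowerSeries.coeff_zero_eq_constantCoeff_apply, map_mul,
        ← PowerSeries.coeff_zero_eq_constantCoeff_apply,
        ← PowerSeries.coeff_zero_eq_constantCoeff_apply, hum.1, hvm.1, one_mul]
    · have h1 := hum.2
      have h2 := hvm.2
      rw [PowerSeries.smul_eq_C_mul, map_neg, neg_mul] at h1
      rw [PowerSeries.smul_eq_C_mul] at h2
      have key : PowerSeries.derivativeFun (um * vm) * g = 0 := by
        rw [PowerSeries.derivativeFun_mul, smul_eq_mul, smul_eq_mul]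
        linear_combination um * h2 + vm * h1
      rcases mul_eq_zero.mp key with h | h
      · exact h
      · exact absurd h hgne
  have hvu : vm * um = 1 := by rw [mul_comm]; exact huv
  -- the key power series identity
  have keyid : PowerSeries.derivativeFun Tf + lam • (dvm * um * Tf) = 1 := by
    set w : PowerSeries ℂ := g⁻¹ with hw
    have hwg : w * g = 1 := PowerSeries.inv_mul_cancel g (by rw [hg0]; exact one_ne_zero)
    have hdw : w * PowerSeries.derivativeFun g + g * PowerSeries.derivativeFun w = 0 := by
      have h3 := congrArg PowerSeries.derivativeFun hwg
      rw [PowerSeries.derivativeFun_mul, PowerSeries.derivativeFun_one,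
        smul_eq_mul, smul_eq_mul] at h3
      linear_combination h3
    have hTfd : PowerSeries.derivativeFun Tf = f * PowerSeries.derivativeFun w + w * g := by
      rw [hTf, PowerSeries.derivativeFun_mul, smul_eq_mul, smul_eq_mul, ← hg]
    have hv2 : dvm * g = PowerSeries.C (1/lam) * (PowerSeries.derivativeFun g * vm) := by
      have := hvm.2
      rw [PowerSeries.smul_eq_C_mul] at this
      exact this
    have hClam : (PowerSeries.C lam) * (PowerSeries.C (1/lam)) = 1 := by
      rw [← map_mul, mul_one_div_cancel hlam, map_one]
    refine mul_right_cancel₀ (pow_ne_zero 2 hgne) ?_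
    rw [hTfd, hTf, PowerSeries.smul_eq_C_mul]
    linear_combination (f*g) * hdw + (PowerSeries.C lam * um * f * w * g) * hv2
      + (um * f * w * g * PowerSeries.derivativeFun g * vm) * hClam
      + (f * w * g * PowerSeries.derivativeFun g) * huv + (g^2) * hwg
  -- operator versions
  have hSuSv : Su * Sv = 1 := by
    rw [hSu', hSv', ← substD_mul, huv, substD_one]
  have hSvSu : Sv * Su = 1 := by
    rw [hSu', hSv', ← substD_mul, hvu, substD_one]
  -- key operator identity
  have keyop : Sv * B * Su = A := by
    rw [hB, hA, hSu', hSv', hT2, hT'2]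
    have e1 : substD vm * substD (PowerSeries.derivativeFun Tf) * substD um
        = substD (PowerSeries.derivativeFun Tf) := by
      rw [← substD_mul, ← substD_mul]
      congr 1
      linear_combination PowerSeries.derivativeFun Tf * hvu
    have c2 : substD vm * substD Tf * substD um = substD Tf := by
      rw [← substD_mul, ← substD_mul]
      congr 1
      linear_combination Tf * hvu
    have c3 : substD dvm * substD Tf * substD um = substD (dvm * um * Tf) := by
      rw [← substD_mul, ← substD_mul]
      congr 1
      ring
    have e2 : substD vm * (mulX * substD Tf) * substD um
        = mulX * substD Tf + substD (dvm * um * Tf) := by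
      calc substD vm * (mulX * substD Tf) * substD um
          = (substD vm * mulX) * (substD Tf * substD um) := by noncomm_ring
        _ = (mulX * substD vm + substD dvm) * (substD Tf * substD um) := by
            rw [substD_mulX, hdvm]
        _ = mulX * (substD vm * substD Tf * substD um)
              + substD dvm * substD Tf * substD um := by noncomm_ring
        _ = _ := by rw [c2, c3]
    have e3 : substD (PowerSeries.derivativeFun Tf) + lam • substD (dvm * um * Tf) = 1 := by
      rw [← substD_smul, ← substD_add, keyid, substD_one]
    rw [mul_add, add_mul, mul_smul_comm, smul_mul_assoc, e1, e2, smul_add]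
    rw [← e3]
    abel
  -- B = Su * A * Sv and Binv = Su * Ainv * Sv
  have hBeq : B = Su * A * Sv := by
    rw [← keyop]
    have : Su * (Sv * B * Su) * Sv = (Su * Sv) * B * (Su * Sv) := by noncomm_ring
    rw [this, hSuSv, one_mul, mul_one]
  have h1 : B * (Su * Ainv * Sv) = 1 := by
    rw [hBeq]
    have : (Su * A * Sv) * (Su * Ainv * Sv) = Su * (A * ((Sv * Su) * Ainv)) * Sv := by
      noncomm_ring
    rw [this, hSvSu, one_mul, hAinv.1, mul_one, hSuSv]
  have hBinvEq : Binv = Su * Ainv * Sv := by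
    calc Binv = Binv * (B * (Su * Ainv * Sv)) := by rw [h1, mul_one]
      _ = (Binv * B) * (Su * Ainv * Sv) := by noncomm_ring
      _ = Su * Ainv * Sv := by rw [hBinv.2, one_mul]
  rw [hBinvEq]
  noncomm_ring
end

section
/- Generating function for ultraspherical-type polynomials: let λ ≠ 0, a, b ∈ ℂ and let q_n be the monic orthogonal polynomials with dual raising operator x + a + b(2+λθ)/((1+λθ)(1+λ+λθ)) D. Then Σ_{n≥0} C(-1/λ, n) (-λ y)^n q_n(x) = (1 + λ(a - x) y + λ b y²)^{-1/λ} as formal power series in y over ℂ[x]. -/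
open Polynomial Nat

open Finset in
private lemma tri_zero' {M : Type*} [AddCommGroup M] [Module ℂ M] (s : ℕ → M) (d : ℕ → ℕ → ℂ)
    (hdd : ∀ n, d n n = 1) (hsum : ∀ n, ∑ j ∈ range (n+1), d n j • s j = 0) : ∀ j, s j = 0 := by
  intro j
  induction j using Nat.strong_induction_on with
  | _ j ih =>
    have h := hsum j
    rw [Finset.sum_range_succ] at h
    have hz : ∑ i ∈ range j, d j i • s i = 0 :=
      Finset.sum_eq_zero fun i hi => by rw [ih i (Finset.mem_range.mp hi), smul_zero]
    rw [hz, zero_add, hdd, one_smul] at h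
    exact h

open Finset in
private lemma sumA' {M : Type*} [AddCommGroup M] [Module ℂ M] (q : ℕ → M) (d : ℕ → ℕ → ℂ)
    (γ : ℕ → ℂ) (a : ℂ)
    (hd0 : ∀ n, d (n+1) 0 = a * d n 0 + γ 0 * (1 * d n 1))
    (hdrec : ∀ n k, d (n+1) (k+1) = d n k + a * d n (k+1) + γ (k+1) * (((k:ℂ)+2) * d n (k+2)))
    (htri : ∀ n k, n < k → d n k = 0) (n : ℕ) :
    ∑ k ∈ range (n+2), d (n+1) k • q k
      = ∑ j ∈ range (n+1), d n j • (q (j+1) + a • q j + ((j:ℂ) * γ (j-1)) • q (j-1)) := by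
  rw [Finset.sum_range_succ']
  simp only [hdrec, hd0, add_smul, smul_add, smul_smul]
  rw [Finset.sum_add_distrib, Finset.sum_add_distrib, Finset.sum_add_distrib, Finset.sum_add_distrib]
  have hS2 : (∑ i ∈ range (n+1), (a * d n (i+1)) • q (i+1)) + (a * d n 0) • q 0
      = ∑ j ∈ range (n+1), (d n j * a) • q j := by
    rw [← Finset.sum_range_succ' (fun j => (a * d n j) • q j) (n+1)]
    rw [Finset.sum_range_succ]
    rw [htri n (n+1) (by omega)]
    simp [mul_comm]
  have hS3 : (∑ i ∈ range (n+1), (γ (i+1) * (((i:ℂ)+2) * d n (i+2))) • q (i+1))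
        + (γ 0 * (1 * d n 1)) • q 0
      = ∑ j ∈ range (n+1), (d n j * ((j:ℂ) * γ (j-1))) • q (j-1) := by
    have e1 : (∑ i ∈ range (n+1), (γ (i+1) * (((i:ℂ)+2) * d n (i+2))) • q (i+1))
        + (γ 0 * (1 * d n 1)) • q 0
        = ∑ m ∈ range (n+2), (γ m * (((m:ℂ)+1) * d n (m+1))) • q m := by
      rw [Finset.sum_range_succ' (fun m => (γ m * (((m:ℂ)+1) * d n (m+1))) • q m) (n+1)]
      congr 1
      · exact Finset.sum_congr rfl fun i _ => by push_cast; ring_nf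
      · norm_num
    rw [e1, Finset.sum_range_succ, Finset.sum_range_succ]
    rw [htri n (n+2) (by omega), htri n (n+1) (by omega)]
    rw [Finset.sum_range_succ' (fun j => (d n j * ((j:ℂ) * γ (j-1))) • q (j-1)) n]
    simp only [Nat.cast_zero, zero_mul, mul_zero, zero_smul, smul_zero, add_zero]
    exact Finset.sum_congr rfl fun i _ => by push_cast; ring_nf
  rw [← hS2, ← hS3]
  abel

private lemma PSmono (R : Type*) [CommRing R] (k : ℕ) (c : R) :
    PowerSeries.monomial k c = (PowerSeries.X)^k * PowerSeries.C c := by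
  ext n
  simp [PowerSeries.coeff_X_pow, PowerSeries.coeff_monomial, PowerSeries.coeff_mul_C]

private lemma PScoeff_mul_mono {R : Type*} [CommRing R] (f : PowerSeries R) (k n : ℕ) (c : R) :
    PowerSeries.coeff n (f * PowerSeries.monomial k c)
      = if k ≤ n then PowerSeries.coeff (n - k) f * c else 0 := by
  rw [PSmono, ← mul_assoc, PowerSeries.coeff_mul_C, PowerSeries.coeff_mul_X_pow']
  split <;> simp

private lemma PScoeff_derivativeFun {R : Type*} [CommRing R] (f : PowerSeries R) (n : ℕ) :
    PowerSeries.coeff n f.derivativeFun = PowerSeries.coeff (n + 1) f * (n + 1) :=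
  PowerSeries.coeff_derivative f n

/-- Generating function of the ultraspherical-type family: the monic polynomials `qₙ`
whose dual raising operator is `x + a + b(2+λθ)/((1+λθ)(1+λ+λθ)) D` satisfy
`Σₙ C(-1/λ, n) (-λy)ⁿ qₙ(x) = (1 + λ(a-x)y + λby²)^{-1/λ}`.
The dual family `rₙ = G_Q⁻¹ xⁿ` is built from the dual raising operator,
and the right-hand side is characterized as the binomial-series power `g^{-1/λ}`
by its constant term `1` and the equation `u' g = (-1/λ) g' u`. -/
theorem ultraspherical_gen_fun (lam a b : ℂ) (hlam : lam ≠ 0)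
    (hden : ∀ n : ℕ, 1 + lam * n ≠ 0)
    (Bθ : Module.End ℂ (Polynomial ℂ))
    (hBθ : ∀ k : ℕ, Bθ (X ^ k) =
      (b * (2 + lam * k) / ((1 + lam * k) * (1 + lam + lam * k))) • X ^ k)
    (r : ℕ → Polynomial ℂ)
    (hr0 : r 0 = 1)
    (hrrec : ∀ n : ℕ, r (n + 1) = (X + C a) * r n + Bθ (derivative (r n)))
    (G : Polynomial ℂ ≃ₗ[ℂ] Polynomial ℂ)
    (hG : ∀ n : ℕ, G.symm (X ^ n) = r n)
    (q : ℕ → Polynomial ℂ) (hq : ∀ n : ℕ, q n = G (X ^ n))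
    (g u : PowerSeries (Polynomial ℂ))
    (hg : g = 1 + (PowerSeries.monomial 1) (C (lam * a) - C lam * X) +
      (PowerSeries.monomial 2) (C (lam * b)))
    (hu0 : PowerSeries.coeff 0 u = 1)
    (huODE : PowerSeries.derivativeFun u * g =
      PowerSeries.C (C (-(1 / lam))) * (PowerSeries.derivativeFun g * u)) :
    ∀ n : ℕ, PowerSeries.coeff n u =
      (((∏ i ∈ Finset.range n, (-(1 / lam) - (i : ℂ))) / (n ! : ℂ)) * (-lam) ^ n) • q n := by
  classical
  set γ : ℕ → ℂ := fun k => b * (2 + lam * k) / ((1 + lam * k) * (1 + lam + lam * k)) with hγdef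
  -- Bθ acts coefficientwise
  have hB' : ∀ (p : Polynomial ℂ) (k : ℕ), (Bθ p).coeff k = γ k * p.coeff k := by
    intro p
    induction p using Polynomial.induction_on' with
    | add p s hp hs => intro k; simp [map_add, hp, hs, mul_add]
    | monomial m c =>
      intro k
      have hm : (monomial m c : Polynomial ℂ) = c • X ^ m := by
        rw [Polynomial.smul_X_eq_monomial]
      rw [hm, map_smul, hBθ m]
      simp only [coeff_smul, coeff_X_pow, smul_eq_mul]
      split_ifs with h
      · subst h; ring
      · ring
  -- coefficients of r
  set d : ℕ → ℕ → ℂ := fun n k => (r n).coeff k with hddef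
  have hd0 : ∀ n, d (n+1) 0 = a * d n 0 + γ 0 * (1 * d n 1) := by
    intro n
    show (r (n+1)).coeff 0 = _
    rw [hrrec, coeff_add, hB', add_mul, coeff_add, coeff_derivative]
    simp [mul_coeff_zero]
    rfl
  have hdrec : ∀ n k, d (n+1) (k+1) = d n k + a * d n (k+1) + γ (k+1) * (((k:ℂ)+2) * d n (k+2)) := by
    intro n k
    show (r (n+1)).coeff (k+1) = _
    rw [hrrec, coeff_add, hB', add_mul, coeff_add, coeff_derivative, coeff_X_mul, coeff_C_mul]
    push_cast
    ring
  have htri : ∀ n, (∀ k, n < k → d n k = 0) ∧ d n n = 1 := by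
    intro n
    induction n with
    | zero =>
      constructor
      · intro k hk
        show (r 0).coeff k = 0
        rw [hr0]
        exact Polynomial.coeff_one.trans (by simp; omega)
      · show (r 0).coeff 0 = 1
        rw [hr0]; simp
    | succ n ih =>
      constructor
      · intro k hk
        match k, hk with
        | (k+1), hk =>
          rw [hdrec, ih.1 k (by omega), ih.1 (k+1) (by omega), ih.1 (k+2) (by omega)]
          ring
      · rw [hdrec, ih.2, ih.1 (n+1) (by omega), ih.1 (n+2) (by omega)]
        ring
  -- expansion of X^n in terms of q
  have hexp : ∀ n, (X : Polynomial ℂ)^n = ∑ k ∈ Finset.range (n+1), d n k • q k := by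
    intro n
    have hdeg : (r n).natDegree < n + 1 := by
      rw [Nat.lt_succ_iff, Polynomial.natDegree_le_iff_coeff_eq_zero]
      exact fun N hN => (htri n).1 N hN
    have hrsum : r n = ∑ k ∈ Finset.range (n+1), d n k • X ^ k := by
      conv_lhs => rw [Polynomial.as_sum_range' (r n) (n+1) hdeg]
      exact Finset.sum_congr rfl fun i _ => (Polynomial.smul_X_eq_monomial).symm
    have hGr : G (r n) = X ^ n := by
      rw [← hG n, G.apply_symm_apply]
    rw [← hGr, hrsum, map_sum]
    exact Finset.sum_congr rfl fun i _ => by rw [map_smul, ← hq]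
  -- the three-term recurrence for q
  have hkey : ∀ j, X * q j = q (j+1) + a • q j + ((j:ℂ) * γ (j-1)) • q (j-1) := by
    have hz := tri_zero' (fun j => X * q j - (q (j+1) + a • q j + ((j:ℂ) * γ (j-1)) • q (j-1))) d
      (fun n => (htri n).2) ?_
    · intro j
      have := hz j
      rw [sub_eq_zero] at this
      exact this
    · intro n
      simp only [smul_sub]
      rw [Finset.sum_sub_distrib]
      have h1 : ∑ j ∈ Finset.range (n+1), d n j • (X * q j) = X ^ (n+1) := by
        rw [pow_succ, mul_comm ((X: Polynomial ℂ)^n) X, hexp n, Finset.mul_sum]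
        exact Finset.sum_congr rfl fun i _ => (mul_smul_comm _ _ _).symm
      have h2 : ∑ j ∈ Finset.range (n+1),
          d n j • (q (j+1) + a • q j + ((j:ℂ) * γ (j-1)) • q (j-1)) = X ^ (n+1) := by
        rw [← sumA' q d γ a hd0 hdrec (fun n k => (htri n).1 k) n, ← hexp (n+1)]
      rw [h1, h2, sub_self]
  have hq0 : q 0 = 1 := by
    have h1 : G.symm (1 : Polynomial ℂ) = 1 := by
      have := hG 0; rwa [pow_zero, hr0] at this
    have : G (1 : Polynomial ℂ) = 1 := by
      conv_lhs => rw [← h1, G.apply_symm_apply]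
    rw [hq 0, pow_zero, this]
  -- power series coefficient extraction
  set Ap : Polynomial ℂ := C (lam*a) - C lam * X with hApdef
  set Bp : Polynomial ℂ := C (lam*b) with hBpdef
  have hgc : ∀ k, PowerSeries.coeff k g
      = if k = 0 then 1 else if k = 1 then Ap else if k = 2 then Bp else 0 := by
    intro k
    rw [hg]
    simp only [map_add, PowerSeries.coeff_one, PowerSeries.coeff_monomial]
    rcases k with _|_|_|k <;> simp
  have hgd : PowerSeries.derivativeFun g
      = PowerSeries.monomial 0 Ap + PowerSeries.monomial 1 (Bp * 2) := by
    apply PowerSeries.ext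
    intro k
    rw [PScoeff_derivativeFun, hgc (k+1)]
    rw [map_add, PowerSeries.coeff_monomial, PowerSeries.coeff_monomial]
    rcases k with _|_|k
    · norm_num
    · norm_num
    · norm_num
      exact fun h => absurd h (by omega)
  have hgu : ∀ m, PowerSeries.coeff m (PowerSeries.derivativeFun g * u)
      = PowerSeries.coeff m u * Ap
        + (if 1 ≤ m then PowerSeries.coeff (m-1) u * (Bp*2) else 0) := by
    intro m
    rw [hgd, add_mul, map_add,
      mul_comm ((PowerSeries.monomial 0) Ap) u,
      mul_comm ((PowerSeries.monomial 1) (Bp*2)) u,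
      PScoeff_mul_mono, PScoeff_mul_mono]
    simp
  have hug : ∀ m, PowerSeries.coeff m (PowerSeries.derivativeFun u * g)
      = PowerSeries.coeff m (PowerSeries.derivativeFun u)
        + (if 1 ≤ m then PowerSeries.coeff (m-1) (PowerSeries.derivativeFun u) * Ap else 0)
        + (if 2 ≤ m then PowerSeries.coeff (m-2) (PowerSeries.derivativeFun u) * Bp else 0) := by
    intro m
    rw [hg, mul_add, mul_add, mul_one, map_add, map_add, PScoeff_mul_mono, PScoeff_mul_mono]
  have hE0 : PowerSeries.coeff 1 u = C (-(1/lam)) * Ap := by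
    have h := congrArg (PowerSeries.coeff 0) huODE
    rw [hug 0, mul_comm (PowerSeries.C (C (-(1 / lam)))),
      PowerSeries.coeff_mul_C, hgu 0] at h
    simp only [PScoeff_derivativeFun, hu0] at h
    simp only [show ¬(1:ℕ) ≤ 0 by omega, show ¬(2:ℕ) ≤ 0 by omega, if_false, Nat.cast_zero,
      zero_add, mul_one, one_mul, add_zero] at h
    linear_combination h
  have hEn : ∀ m : ℕ, PowerSeries.coeff (m+2) u * (((m:ℕ) : Polynomial ℂ)+2)
      + PowerSeries.coeff (m+1) u * (((m:ℕ) : Polynomial ℂ)+1) * Ap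
      + PowerSeries.coeff m u * ((m:ℕ) : Polynomial ℂ) * Bp
      = C (-(1/lam)) * (PowerSeries.coeff (m+1) u * Ap
          + PowerSeries.coeff m u * (Bp * 2)) := by
    intro m
    have h := congrArg (PowerSeries.coeff (m+1)) huODE
    rw [hug (m+1), mul_comm (PowerSeries.C (C (-(1 / lam)))),
      PowerSeries.coeff_mul_C, hgu (m+1)] at h
    simp only [PScoeff_derivativeFun, Nat.add_sub_cancel] at h
    rcases m with _|m
    · norm_num at h ⊢
      linear_combination h
    · norm_num [Nat.succ_sub_one] at h ⊢
      push_cast at h ⊢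
      linear_combination h
  -- the scalar coefficients
  set B : ℕ → ℂ := fun n =>
    (∏ i ∈ Finset.range n, (-(1 / lam) - (i : ℂ))) / (n ! : ℂ) * (-lam) ^ n with hBdef
  have hBstep : ∀ m : ℕ, B (m+1) * ((m:ℂ)+1) = B m * ((-(1/lam)) - m) * (-lam) := by
    intro m
    have h1 : ((m ! : ℕ) : ℂ) ≠ 0 := Nat.cast_ne_zero.mpr (Nat.factorial_ne_zero m)
    have h2 : ((m:ℂ) + 1) ≠ 0 := by
      have : (((m+1:ℕ)) : ℂ) ≠ 0 := Nat.cast_ne_zero.mpr (by omega)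
      push_cast at this
      exact this
    simp only [hBdef]
    rw [Finset.prod_range_succ, Nat.factorial_succ]
    push_cast
    field_simp
    ring
  suffices H : ∀ n : ℕ, PowerSeries.coeff n u = B n • q n ∧
      PowerSeries.coeff (n+1) u = B (n+1) • q (n+1) by
    intro n
    have := (H n).1
    simp only [hBdef] at this
    exact this
  intro n
  induction n with
  | zero =>
    have hB0 : B 0 = 1 := by simp [hBdef]
    have hB1 : B 1 = 1 := by
      simp only [hBdef]
      rw [Finset.prod_range_one]
      simp
      field_simp
    have hq1 : q 1 = X - C a := by
      have h3 := hkey 0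
      rw [hq0] at h3
      simp only [Nat.cast_zero, zero_mul, zero_smul, add_zero, mul_one,
        Polynomial.smul_eq_C_mul, mul_one] at h3
      linear_combination -h3
    constructor
    · rw [hu0, hq0, hB0, one_smul]
    · rw [hE0, hq1, hB1, one_smul, hApdef]
      have e1 : C (-(1/lam)) * C (lam*a) = -(C a) := by
        rw [← C_mul, ← C_neg]
        congr 1
        field_simp
        try ring
      have e2 : C (-(1/lam)) * C lam = -1 := by
        rw [← C_mul]
        have : -(1/lam) * lam = -1 := by field_simp
        rw [this]
        simp
      linear_combination e1 - X * e2
  | succ n ih =>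
    refine ⟨ih.2, ?_⟩
    -- scalar identities
    have sX : (((n:ℂ)+1) - (-(1/lam))) * B (n+1) * lam = B (n+2) * ((n:ℂ)+2) := by
      have h1 := hBstep (n+1)
      push_cast at h1
      linear_combination -h1
    have hkeyS : lam * b * (2 * (-(1/lam)) - n) =
        -(((-(1/lam)) - n) * ((-(1/lam)) - ((n:ℂ)+1)) * lam^2 * γ n) := by
      have hd1 := hden n
      have hd2 : (1 + lam + lam * (n:ℂ)) ≠ 0 := fun hc => hden (n+1) (by push_cast; linear_combination hc)
      simp only [hγdef]
      field_simp
      ring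
    have sB : (-(1/lam)) * (B n * (lam*b) * 2) - (n:ℂ) * (B n * (lam*b)) =
        -(B (n+2) * (((n:ℂ)+1) * γ n) * ((n:ℂ)+2)) := by
      have h1 := hBstep (n+1)
      push_cast at h1
      have h2 := hBstep n
      linear_combination (((n:ℂ)+1) * γ n) * h1 + ((-(1/lam) - ((n:ℂ)+1)) * (-lam) * γ n) * h2
        + B n * hkeyS
    -- put everything together
    have h := hEn n
    rw [ih.1, ih.2] at h
    have h3 := hkey (n+1)
    simp only [Nat.add_sub_cancel] at h3
    push_cast at h3
    have hz2 : ((n:ℂ)+2) ≠ 0 := by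
      have : (((n+2:ℕ)) : ℂ) ≠ 0 := Nat.cast_ne_zero.mpr (by omega)
      push_cast at this
      exact this
    refine mul_right_cancel₀ (b := (C ((n:ℂ)+2))) (fun hc => hz2 (by
      simpa using congrArg (fun p => Polynomial.coeff p 0) hc)) ?_
    have hX := congrArg C sX
    have hB3 := congrArg C sB
    simp only [Polynomial.smul_eq_C_mul] at h h3 ⊢
    rw [hApdef, hBpdef] at h
    simp only [C_mul, C_add, C_sub, C_neg, C_1, C_0, C_eq_natCast, map_ofNat] at h h3 hX hB3 ⊢
    linear_combination h + (C (B (n+2)) * (((n:ℕ) : Polynomial ℂ)+2)) * h3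
      + (X * q (n+1) - C a * q (n+1)) * hX + q n * hB3
end

section
/- Long division lemma: let L be the operator on ℂ[[y]] with L·y^n = y^{n}/(n+1)·(1/y) i.e. L = (1+θ)^{-1}d/dy, δ = 1 - yL (evaluation at 0 composed with constant embedding), B ∈ 1 + yℂ[[y]], and H_θ an invertible diagonal operator (H_θ · y^n = H_n y^n, H_n ≠ 0). Then the operator identity H_θ^{-1} ∘ M_{H_θ·B} ∘ L ∘ M_{(H_θ·B)}^{-1} ∘ H_θ = (H_{θ+1}/H_θ) ∘ M_B ∘ L ∘ M_B^{-1} holds, where M_g denotes multiplication by the power series g and H_θ·B is the series with coefficients H_n [y^n]B. -/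
open PowerSeries

private lemma key_div (L : Module.End ℂ (PowerSeries ℂ))
    (hL : ∀ (f : PowerSeries ℂ) (n : ℕ),
      PowerSeries.coeff n (L f) = PowerSeries.coeff (n + 1) f)
    (u g : PowerSeries ℂ) (hu : PowerSeries.constantCoeff u ≠ 0) (n : ℕ) :
    PowerSeries.coeff n (u * L (u⁻¹ * g)) =
      PowerSeries.coeff (n + 1) g -
        PowerSeries.constantCoeff g * (PowerSeries.constantCoeff u)⁻¹ *
          PowerSeries.coeff (n + 1) u := by
  have hXL : ∀ h : PowerSeries ℂ,
      X * L h = h - PowerSeries.C (PowerSeries.constantCoeff h) := by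
    intro h
    ext k
    cases k with
    | zero => simp [coeff_zero_eq_constantCoeff]
    | succ k => simp [coeff_succ_X_mul, hL, Nat.succ_ne_zero]
  have h1 : X * (u * L (u⁻¹ * g)) =
      g - PowerSeries.C (PowerSeries.constantCoeff (u⁻¹ * g)) * u := by
    calc X * (u * L (u⁻¹ * g)) = u * (X * L (u⁻¹ * g)) := by ring
    _ = u * (u⁻¹ * g - PowerSeries.C (PowerSeries.constantCoeff (u⁻¹ * g))) := by
        rw [hXL]
    _ = u * u⁻¹ * g - PowerSeries.C (PowerSeries.constantCoeff (u⁻¹ * g)) * u := by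
        ring
    _ = _ := by rw [PowerSeries.mul_inv_cancel u hu, one_mul]
  have h2 := congrArg (PowerSeries.coeff (n + 1)) h1
  rw [coeff_succ_X_mul] at h2
  rw [h2, map_sub, coeff_C_mul, map_mul, constantCoeff_inv]
  ring

/-- Long division lemma:
`H_θ⁻¹ ∘ M_{H_θ·B} ∘ L ∘ M_{H_θ·B}⁻¹ ∘ H_θ = (H_{θ+1}/H_θ) ∘ M_B ∘ L ∘ M_B⁻¹`,
where `L` is the 0-derivative (`L·yⁿ = y^{n-1}`, `L·1 = 0`), `H_θ` is an invertible
diagonal operator, `M_g` is multiplication by `g`, and `H_θ·B` is the coefficientwise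
application of `H_θ` to `B ∈ 1 + yℂ[[y]]`. -/
theorem long_division_lemma (H : ℕ → ℂ) (hH : ∀ n, H n ≠ 0)
    (B : PowerSeries ℂ) (hB : PowerSeries.coeff 0 B = 1)
    (L Hθ Hθinv Hratio : Module.End ℂ (PowerSeries ℂ))
    (hL : ∀ (f : PowerSeries ℂ) (n : ℕ),
      PowerSeries.coeff n (L f) = PowerSeries.coeff (n + 1) f)
    (hHθ : ∀ (f : PowerSeries ℂ) (n : ℕ),
      PowerSeries.coeff n (Hθ f) = H n * PowerSeries.coeff n f)
    (hHinv : ∀ (f : PowerSeries ℂ) (n : ℕ),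
      PowerSeries.coeff n (Hθinv f) = (H n)⁻¹ * PowerSeries.coeff n f)
    (hHr : ∀ (f : PowerSeries ℂ) (n : ℕ),
      PowerSeries.coeff n (Hratio f) = H (n + 1) / H n * PowerSeries.coeff n f)
    (HB : PowerSeries ℂ)
    (hHB : ∀ n : ℕ, PowerSeries.coeff n HB = H n * PowerSeries.coeff n B) :
    Hθinv * (LinearMap.mulLeft ℂ HB : Module.End ℂ (PowerSeries ℂ)) * L *
        (LinearMap.mulLeft ℂ HB⁻¹ : Module.End ℂ (PowerSeries ℂ)) * Hθ =
      Hratio * (LinearMap.mulLeft ℂ B : Module.End ℂ (PowerSeries ℂ)) * L *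
        (LinearMap.mulLeft ℂ B⁻¹ : Module.End ℂ (PowerSeries ℂ)) := by
  have hB0 : PowerSeries.constantCoeff B = 1 := by
    rw [← coeff_zero_eq_constantCoeff]; exact hB
  have hHB0 : PowerSeries.constantCoeff HB = H 0 := by
    rw [← coeff_zero_eq_constantCoeff, hHB 0, hB, mul_one]
  ext f n
  simp only [Module.End.mul_apply, LinearMap.mulLeft_apply]
  rw [hHinv, hHr, key_div L hL HB (Hθ f) (by rw [hHB0]; exact hH 0),
      key_div L hL B f (by rw [hB0]; simp)]
  have e1 : PowerSeries.coeff (n + 1) (Hθ f) = H (n + 1) * PowerSeries.coeff (n + 1) f :=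
    hHθ f (n + 1)
  have e0 : PowerSeries.constantCoeff (Hθ f) = H 0 * PowerSeries.constantCoeff f := by
    rw [← coeff_zero_eq_constantCoeff, hHθ f 0, coeff_zero_eq_constantCoeff]
  rw [e1, e0, hHB0, hHB (n + 1), hB0]
  field_simp [hH 0, hH n]
end
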